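/- Let (C, ▷) carry an operator † : C(▷X × Y, X) → C(Y, X) (not necessarily satisfying the fixpoint identity) which satisfies the parameter identity and uniformity. Define q_X = π_ℓ ∘ (▷π_r × id_X)† : X → ▷X, where ▷π_r × id_X : ▷(▷X × X) × X → ▷X × X. Then q : Id → ▷ is a natural transformation, i.e., q_{X'} ∘ h = ▷h ∘ q_X for all h : X → X'. -/
import Mathlib


open CategoryTheory CategoryTheory.Limits

/-- Let `(C, ▷)` carry an operator `†` (not necessarily satisfying the fixpoint identity)
satisfying the parameter identity and uniformity. With
`q_X = π_ℓ ∘ (▷π_r × id_X)† : X → ▷X`, the family `q` is natural: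
`h ≫ q_{X'} = q_X ≫ ▷h`. -/
theorem stmt9 {C : Type*} [Category C] [HasFiniteProducts C]
    (F : C ⥤ C)
    (dag : ∀ {X Y : C}, (F.obj X ⨯ Y ⟶ X) → (Y ⟶ X))
    (hparam : ∀ {X Y Z : C} (f : F.obj X ⨯ Y ⟶ X) (h : Z ⟶ Y),
      h ≫ dag f = dag (prod.map (𝟙 (F.obj X)) h ≫ f))
    (hunif : ∀ {X X' Y : C} (f : F.obj X ⨯ Y ⟶ X) (g : F.obj X' ⨯ Y ⟶ X') (h : X ⟶ X'),
      f ≫ h = prod.map (F.map h) (𝟙 Y) ≫ g → dag f ≫ h = dag g) :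
    ∀ {X X' : C} (h : X ⟶ X'),
      h ≫ (dag (prod.map (F.map (prod.snd : F.obj X' ⨯ X' ⟶ X')) (𝟙 X')) ≫ prod.fst)
        = (dag (prod.map (F.map (prod.snd : F.obj X ⨯ X ⟶ X)) (𝟙 X)) ≫ prod.fst)
            ≫ F.map h := by
  intro X X' h
  have key := hunif (prod.map (F.map (prod.snd : F.obj X ⨯ X ⟶ X)) (𝟙 X))
    (prod.map (𝟙 (F.obj (F.obj X' ⨯ X'))) h ≫
      prod.map (F.map (prod.snd : F.obj X' ⨯ X' ⟶ X')) (𝟙 X'))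
    (prod.map (F.map h) h) ?_
  · rw [← Category.assoc, hparam, ← key]
    rw [Category.assoc, prod.map_fst, Category.assoc, ← Category.assoc]
  · simp only [prod.map_map, Category.id_comp, Category.comp_id, ← F.map_comp, prod.map_snd]
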